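/- Let F_q be a finite field of characteristic p ≥ 5. The standard basis of ℂ^q together with the q bases B_α = {q^{-1/2}(ω_p^{tr((k+α)³ + λ(k+α))})_{k ∈ F_q} : λ ∈ F_q}, α ∈ F_q, form a set of q + 1 pairwise mutually unbiased orthonormal bases of ℂ^q. -/

import Mathlib

open scoped InnerProductSpace

/-- The Alltop vector `b_{λ,α} = q^{-1/2} (ω_p^{tr((k+α)³ + λ(k+α))})_{k ∈ F_q}`,
where `ω_p = exp(2πi/p)` and `tr` is the absolute trace from `F_q` to `F_p`. -/
noncomputable def alltop (p : ℕ) (F : Type) [Field F] [Fintype F] [Algebra (ZMod p) F]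
    (lam alpha : F) : EuclideanSpace ℂ F :=
  WithLp.toLp 2 (fun k => (1 / Real.sqrt (Fintype.card F) : ℂ) *
    Complex.exp (2 * Real.pi * Complex.I *
      (ZMod.val (Algebra.trace (ZMod p) F ((k + alpha) ^ 3 + lam * (k + alpha))) : ℂ) / p))

/-- The family consisting of the standard basis (index `none`) and the Alltop
bases `B_α` for `α ∈ F_q` (index `some α`). -/
noncomputable def Wa (p : ℕ) (F : Type) [Field F] [Fintype F] [DecidableEq F]
    [Algebra (ZMod p) F] : Option F → F → EuclideanSpace ℂ F
  | none => fun y => EuclideanSpace.single y (1 : ℂ)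
  | some alpha => fun lam => alltop p F lam alpha

/-!
With `ψ(x) = ω_p^{tr x}`, a primitive additive character of `F_q`, the Alltop vectors are
`q^{-1/2} (ψ(f(k)))_k` for the cubics `f(k) = (k+α)³ + λ(k+α)`. Their entries all have modulus
`q^{-1/2}`, hence unbiasedness against the standard basis. Within `B_α` two phases differ by the
linear function `(λ' - λ)(k + α)`, so orthogonality is orthogonality of characters. For `α ≠ α'`
the cubic terms cancel, leaving a quadratic with leading coefficient `3(α' - α) ≠ 0`, and a
quadratic character sum has square modulus `q`: after Weyl differencing `x = y + t`, the sum over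
`y` is a sum of the nontrivial character `y ↦ ψ(2a t y)` unless `t = 0`.
-/

open scoped ComplexConjugate
open Finset

lemma Orthonormal.exists_orthonormalBasis_of_card_eq_finrank {𝕜 E ι : Type*} [RCLike 𝕜]
    [NormedAddCommGroup E] [InnerProductSpace 𝕜 E] [FiniteDimensional 𝕜 E] [Fintype ι]
    {v : ι → E} (hv : Orthonormal 𝕜 v) (h : Fintype.card ι = Module.finrank 𝕜 E) :
    ∃ B : OrthonormalBasis ι 𝕜 E, ∀ i, B i = v i :=
  ⟨.mk hv (hv.linearIndependent.span_eq_top_of_card_eq_finrank' h).ge,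
    fun i => by rw [OrthonormalBasis.coe_mk]⟩

namespace AddChar

variable {G : Type*} [AddCommGroup G] [Finite G] (ψ : AddChar G ℂ)

lemma sum_mul_conj_sum_eq_sum_sum_sub {ι : Type*} [AddCommGroup ι] [Fintype ι] (f : ι → G) :
    (∑ x, ψ (f x)) * conj (∑ x, ψ (f x)) = ∑ t, ∑ y, ψ (f (y + t) - f y) := calc
  _ = ∑ y, ∑ x, ψ (f x - f y) := by
    simp only [map_sum, ← map_neg_eq_conj, sum_mul_sum, ← map_add_eq_mul, ← sub_eq_add_neg]
    exact sum_comm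
  _ = ∑ y, ∑ t, ψ (f (y + t) - f y) := sum_congr rfl fun y _ =>
    (Fintype.sum_equiv (Equiv.addLeft y) _ _ fun _ => rfl).symm
  _ = _ := sum_comm

lemma norm_sq_sum_quadratic {F : Type*} [Field F] [Fintype F] {ψ : AddChar F ℂ}
    (hψ : ψ.IsPrimitive) {a : F} (ha : 2 * a ≠ 0) (b c : F) :
    ‖∑ x, ψ (a * x ^ 2 + b * x + c)‖ ^ 2 = Fintype.card F := by
  classical
  have hdiff (t y : F) : a * (y + t) ^ 2 + b * (y + t) + c - (a * y ^ 2 + b * y + c) =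
      y * (2 * a * t) + (a * t ^ 2 + b * t) := by ring
  have hinner (t : F) : ∑ y, ψ (y * (2 * a * t) + (a * t ^ 2 + b * t)) =
      if t = 0 then (Fintype.card F : ℂ) else 0 := by
    simp_rw [map_add_eq_mul, ← sum_mul, sum_mulShift _ hψ]
    rcases eq_or_ne t 0 with rfl | ht <;> simp [*]
  have h := ψ.sum_mul_conj_sum_eq_sum_sum_sub (fun x => a * x ^ 2 + b * x + c)
  simp only [hdiff, hinner, sum_ite_eq', mem_univ, if_true, Complex.mul_conj'] at h
  exact_mod_cast h

end AddChar

noncomputable def traceAddChar (p : ℕ) [NeZero p] (F : Type*) [Field F] [Algebra (ZMod p) F] :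
    AddChar F ℂ :=
  ZMod.stdAddChar.compAddMonoidHom (Algebra.trace (ZMod p) F).toAddMonoidHom

lemma traceAddChar_apply (p : ℕ) [NeZero p] {F : Type*} [Field F] [Algebra (ZMod p) F] (x : F) :
    traceAddChar p F x =
      Complex.exp (2 * Real.pi * Complex.I * (Algebra.trace (ZMod p) F x).val / p) :=
  ZMod.toCircle_apply _

lemma isPrimitive_traceAddChar (p : ℕ) [Fact p.Prime] (F : Type*) [Field F] [Finite F]
    [Algebra (ZMod p) F] : (traceAddChar p F).IsPrimitive := by
  have := Fintype.ofFinite F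
  refine AddChar.IsPrimitive.of_ne_one fun h => ?_
  obtain ⟨x, hx⟩ := Algebra.trace_surjective (ZMod p) F 1
  have hx1 : ZMod.stdAddChar (1 : ZMod p) = ZMod.stdAddChar (0 : ZMod p) := by
    rw [← hx, AddChar.map_zero_eq_one]
    exact DFunLike.congr_fun h x
  exact one_ne_zero (ZMod.injective_stdAddChar hx1)

section charVector

variable {ι G : Type*} [Fintype ι] [AddCommGroup G] [Finite G]

noncomputable def charVector (ψ : AddChar G ℂ) (f : ι → G) : EuclideanSpace ℂ ι :=
  WithLp.toLp 2 fun k => (1 / Real.sqrt (Fintype.card ι) : ℂ) * ψ (f k)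

variable (ψ : AddChar G ℂ) (f g : ι → G)

lemma norm_sq_inner_single_charVector [DecidableEq ι] (i : ι) :
    ‖⟪EuclideanSpace.single i (1 : ℂ), charVector ψ f⟫_ℂ‖ ^ 2 = 1 / Fintype.card ι := by
  simp [EuclideanSpace.inner_single_left, charVector]

lemma inner_charVector :
    ⟪charVector ψ f, charVector ψ g⟫_ℂ = (1 / Fintype.card ι : ℂ) * ∑ k, ψ (g k - f k) := by
  have hsq : (1 / Real.sqrt (Fintype.card ι) : ℂ) * (1 / Real.sqrt (Fintype.card ι) : ℂ) =
      1 / Fintype.card ι := by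
    rw [div_mul_div_comm, one_mul, ← Complex.ofReal_mul, Real.mul_self_sqrt (Nat.cast_nonneg _),
      Complex.ofReal_natCast]
  simp only [charVector, PiLp.inner_apply, RCLike.inner_apply, mul_sum, sub_eq_add_neg,
    AddChar.map_add_eq_mul, AddChar.map_neg_eq_conj, map_mul]
  refine sum_congr rfl fun k _ => ?_
  simp only [map_div₀, map_one, Complex.conj_ofReal]
  linear_combination (ψ (g k) * conj (ψ (f k))) * hsq

end charVector

section alltop

variable (p : ℕ) [Fact p.Prime] (F : Type) [Field F] [Fintype F] [Algebra (ZMod p) F]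

lemma alltop_eq_charVector (lam alpha : F) :
    alltop p F lam alpha =
      charVector (traceAddChar p F) fun k => (k + alpha) ^ 3 + lam * (k + alpha) := by
  simp only [alltop, charVector, traceAddChar_apply]

lemma orthonormal_alltop (alpha : F) : Orthonormal ℂ fun lam => alltop p F lam alpha := by
  classical
  rw [orthonormal_iff_ite]
  intro lam lam'
  have hdiff (k : F) : (k + alpha) ^ 3 + lam' * (k + alpha) - ((k + alpha) ^ 3 + lam * (k + alpha))
      = (k + alpha) * (lam' - lam) := by ring
  have hshift : ∑ k, traceAddChar p F ((k + alpha) * (lam' - lam)) =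
      ∑ k, traceAddChar p F (k * (lam' - lam)) :=
    Fintype.sum_equiv (Equiv.addRight alpha) _ _ fun _ => rfl
  simp only [alltop_eq_charVector, inner_charVector, hdiff, hshift,
    AddChar.sum_mulShift _ (isPrimitive_traceAddChar p F), sub_eq_zero, eq_comm (a := lam')]
  split_ifs <;> simp

lemma norm_sq_inner_alltop_of_ne (h2 : (2 : F) ≠ 0) (h3 : (3 : F) ≠ 0) {alpha alpha' : F}
    (halpha : alpha ≠ alpha') (lam lam' : F) :
    ‖⟪alltop p F lam alpha, alltop p F lam' alpha'⟫_ℂ‖ ^ 2 = 1 / Fintype.card F := by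
  have hdiff (k : F) :
      (k + alpha') ^ 3 + lam' * (k + alpha') - ((k + alpha) ^ 3 + lam * (k + alpha)) =
        3 * (alpha' - alpha) * k ^ 2 + (3 * (alpha' ^ 2 - alpha ^ 2) + lam' - lam) * k
          + (alpha' ^ 3 - alpha ^ 3 + lam' * alpha' - lam * alpha) := by ring
  have ha : 2 * (3 * (alpha' - alpha)) ≠ 0 :=
    mul_ne_zero h2 (mul_ne_zero h3 (sub_ne_zero.mpr halpha.symm))
  have hq : (Fintype.card F : ℝ) ≠ 0 := Nat.cast_ne_zero.mpr Fintype.card_ne_zero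
  simp only [alltop_eq_charVector, inner_charVector, hdiff]
  rw [norm_mul, mul_pow, AddChar.norm_sq_sum_quadratic (isPrimitive_traceAddChar p F) ha]
  field_simp
  simp

end alltop

/-- For `F_q` of characteristic `p ≥ 5`, the standard basis of `ℂ^q` together
with the `q` Alltop bases `B_α`, `α ∈ F_q`, form a set of `q + 1` pairwise
mutually unbiased orthonormal bases of `ℂ^q`. -/
theorem alltop_q_add_one_mubs (p : ℕ) [Fact p.Prime] (hp : 5 ≤ p)
    (F : Type) [Field F] [Fintype F] [DecidableEq F] [Algebra (ZMod p) F] :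
    Fintype.card (Option F) = Fintype.card F + 1 ∧
    (∀ o : Option F,
      ∃ B : OrthonormalBasis F ℂ (EuclideanSpace ℂ F), ∀ b : F, B b = Wa p F o b) ∧
    (∀ o o' : Option F, o ≠ o' → ∀ b b' : F,
      ‖⟪Wa p F o b, Wa p F o' b'⟫_ℂ‖ ^ 2 = 1 / Fintype.card F) := by
  have : CharP F p := charP_of_injective_algebraMap (algebraMap (ZMod p) F).injective p
  have h2 : (2 : F) ≠ 0 := by
    exact_mod_cast CharP.cast_ne_zero_of_ne_of_prime F Nat.prime_two (by omega)
  have h3 : (3 : F) ≠ 0 := by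
    exact_mod_cast CharP.cast_ne_zero_of_ne_of_prime F Nat.prime_three (by omega)
  refine ⟨Fintype.card_option, ?_, ?_⟩
  · rintro (_ | alpha)
    · exact ⟨EuclideanSpace.basisFun F ℂ, fun b => by simp [Wa]⟩
    · exact (orthonormal_alltop p F alpha).exists_orthonormalBasis_of_card_eq_finrank
        finrank_euclideanSpace.symm
  · rintro (_ | alpha) (_ | alpha') hne b b'
    · exact absurd rfl hne
    · change ‖⟪EuclideanSpace.single b 1, alltop p F b' alpha'⟫_ℂ‖ ^ 2 = _
      rw [alltop_eq_charVector]
      exact norm_sq_inner_single_charVector _ _ b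
    · change ‖⟪alltop p F b alpha, EuclideanSpace.single b' 1⟫_ℂ‖ ^ 2 = _
      rw [norm_inner_symm, alltop_eq_charVector]
      exact norm_sq_inner_single_charVector _ _ b'
    · exact norm_sq_inner_alltop_of_ne p F h2 h3 (fun h => hne (congrArg some h)) b b'
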